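/- Let K be a convex body in S^d ⊆ ℝ^{d+1}, let H be a (d−1)-dimensional great sphere of S^d with H ∩ K = ∅, let p ∈ H, and let q be a boundary point of K with p ≠ −q. Let F be an exposed face of K containing q whose dimension is smallest among all exposed faces of K containing q. Then q is illuminated from p if and only if the conjugate face F̂ is contained in the open hemisphere H_p = {y ∈ S^d : ⟨p,y⟩ > 0}. -/

import Mathlib

open RealInnerProductSpace Metric Set

noncomputable section

/-- Euclidean `n`-space. -/
abbrev Euc (n : ℕ) := EuclideanSpace ℝ (Fin n)

/-- The unit sphere `S^d` in `ℝ^{d+1}`. -/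
def uSphere (d : ℕ) : Set (Euc (d + 1)) := Metric.sphere 0 1

/-- Radial (normalizing) projection onto the unit sphere. -/
def nproj {n : ℕ} (x : Euc n) : Euc n := ‖x‖⁻¹ • x

/-- The spherical segment (shorter great-circle arc) with endpoints `p` and `q`
(meaningful when `p ≠ -q`). -/
def sphSeg {n : ℕ} (p q : Euc n) : Set (Euc n) :=
  (fun t : ℝ => nproj ((1 - t) • p + t • q)) '' Set.Icc 0 1

/-- The relative interior of the spherical segment with endpoints `p` and `q`. -/
def sphOpenSeg {n : ℕ} (p q : Euc n) : Set (Euc n) :=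
  (fun t : ℝ => nproj ((1 - t) • p + t • q)) '' Set.Ioo 0 1

/-- The great circle through `p` and `q`. -/
def greatCircle (d : ℕ) (p q : Euc (d + 1)) : Set (Euc (d + 1)) :=
  {z ∈ uSphere d | z ∈ Submodule.span ℝ {p, q}}

/-- The open hemisphere with center `x`. -/
def openHemi (d : ℕ) (x : Euc (d + 1)) : Set (Euc (d + 1)) :=
  {y ∈ uSphere d | 0 < ⟪x, y⟫}

/-- The `(d-1)`-dimensional great sphere of `S^d` with pole `u`. -/
def greatSphere (d : ℕ) (u : Euc (d + 1)) : Set (Euc (d + 1)) :=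
  {y ∈ uSphere d | ⟪u, y⟫ = 0}

/-- A set `C ⊆ S^d` is spherically convex if it is contained in an open hemisphere
and contains the shorter arc connecting any two of its points. -/
def SphConvex (d : ℕ) (C : Set (Euc (d + 1))) : Prop :=
  C ⊆ uSphere d ∧ (∃ x ∈ uSphere d, C ⊆ openHemi d x) ∧
    ∀ p ∈ C, ∀ q ∈ C, sphSeg p q ⊆ C

/-- The interior of `K` relative to the sphere `S^d`. -/
def sphInt (d : ℕ) (K : Set (Euc (d + 1))) : Set (Euc (d + 1)) :=
  {x ∈ uSphere d | ∃ U : Set (Euc (d + 1)), IsOpen U ∧ x ∈ U ∧ U ∩ uSphere d ⊆ K}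

/-- The boundary of a closed set `K ⊆ S^d` relative to the sphere `S^d`. -/
def sphBd (d : ℕ) (K : Set (Euc (d + 1))) : Set (Euc (d + 1)) := K \ sphInt d K

/-- A convex body in `S^d`: a compact spherically convex set with nonempty interior
relative to `S^d`. -/
def IsSphBody (d : ℕ) (K : Set (Euc (d + 1))) : Prop :=
  IsCompact K ∧ SphConvex d K ∧ (sphInt d K).Nonempty

/-- The boundary point `q` of `K` is illuminated from the point `p`. -/
def SphIlluminated (d : ℕ) (K : Set (Euc (d + 1))) (p q : Euc (d + 1)) : Prop :=
  q ≠ -p ∧ sphSeg p q ∩ sphInt d K = ∅ ∧ (greatCircle d p q ∩ sphInt d K).Nonempty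

/-- The set `S` illuminates the convex body `K ⊆ S^d`. -/
def SphIlluminates (d : ℕ) (K S : Set (Euc (d + 1))) : Prop :=
  ∀ q ∈ sphBd d K, ∃ p ∈ S, SphIlluminated d K p q

/-- The illumination number of a convex body `K` in `S^d`: the smallest cardinality of
a set illuminating `K` and lying on a `(d-1)`-dimensional great sphere disjoint from `K`. -/
def sphIllumNumber (d : ℕ) (K : Set (Euc (d + 1))) : ℕ∞ :=
  sInf {n : ℕ∞ | ∃ u ∈ uSphere d, greatSphere d u ∩ K = ∅ ∧
    ∃ S : Finset (Euc (d + 1)), ↑S ⊆ greatSphere d u ∧ SphIlluminates d K ↑S ∧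
      (S.card : ℕ∞) = n}

/-- A convex body in a Euclidean space: compact, convex, with nonempty interior. -/
def IsConvexBody {n : ℕ} (K : Set (Euc n)) : Prop :=
  IsCompact K ∧ Convex ℝ K ∧ (interior K).Nonempty

/-- The boundary point `p` of `K` is illuminated from the direction `v`. -/
def IlluminatedDir {n : ℕ} (K : Set (Euc n)) (v p : Euc n) : Prop :=
  ∃ t : ℝ, 0 < t ∧ p + t • v ∈ interior K

/-- The finite set of unit vectors `D` illuminates the convex body `K`. -/
def IlluminatesDirs {n : ℕ} (D : Finset (Euc n)) (K : Set (Euc n)) : Prop :=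
  (∀ v ∈ D, ‖v‖ = 1) ∧ ∀ p ∈ frontier K, ∃ v ∈ D, IlluminatedDir K v p

/-- The illumination number of a convex body in Euclidean space. -/
def illumNumber {n : ℕ} (K : Set (Euc n)) : ℕ∞ :=
  sInf {m : ℕ∞ | ∃ D : Finset (Euc n), IlluminatesDirs D K ∧ (D.card : ℕ∞) = m}

/-- The illumination number of a convex body `K` of an affine subspace of a Euclidean
space, computed within the affine span of `K` (directions are parallel to the affine
span; interior and boundary are relative to the affine span). -/
def intIllumNumber {n : ℕ} (K : Set (Euc n)) : ℕ∞ :=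
  sInf {m : ℕ∞ | ∃ D : Finset (Euc n),
    (∀ v ∈ D, ‖v‖ = 1 ∧ v ∈ (affineSpan ℝ K).direction) ∧
    (∀ p ∈ intrinsicFrontier ℝ K, ∃ v ∈ D, ∃ t : ℝ, 0 < t ∧
      p + t • v ∈ intrinsicInterior ℝ K) ∧
    (D.card : ℕ∞) = m}

/-- A face of a convex body `K` in Euclidean space: a convex subset `F ⊆ K` such that
any segment of `K` whose relative interior meets `F` is contained in `F`. -/
def IsFace {n : ℕ} (K F : Set (Euc n)) : Prop :=
  F ⊆ K ∧ Convex ℝ F ∧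
    ∀ x ∈ K, ∀ y ∈ K, (openSegment ℝ x y ∩ F).Nonempty → segment ℝ x y ⊆ F

/-- The dimension of a subset of a Euclidean space (dimension of its affine hull). -/
def faceDim {n : ℕ} (F : Set (Euc n)) : ℕ := Module.finrank ℝ (vectorSpan ℝ F)

/-- A face of a convex body `K` in `S^d`: a spherically convex subset `F ⊆ K` such that
any spherical segment of `K` whose relative interior meets `F` is contained in `F`. -/
def IsSphFace (d : ℕ) (K F : Set (Euc (d + 1))) : Prop :=
  F ⊆ K ∧ SphConvex d F ∧
    ∀ p ∈ K, ∀ q ∈ K, (sphOpenSeg p q ∩ F).Nonempty → sphSeg p q ⊆ F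

/-- The (spherical) dimension of a subset `F` of `S^d`: one less than the dimension of
its linear hull. -/
def sphFaceDim (d : ℕ) (F : Set (Euc (d + 1))) : ℕ :=
  Module.finrank ℝ (Submodule.span ℝ F) - 1

/-- The polar body of a convex body `K ⊆ S^d`. -/
def sphPolar (d : ℕ) (K : Set (Euc (d + 1))) : Set (Euc (d + 1)) :=
  {x ∈ uSphere d | ∀ y ∈ K, ⟪x, y⟫ ≤ 0}

/-- An exposed face of a convex body `L` in `S^d`: a nonempty intersection of `L`
with a supporting great sphere. -/
def IsSphExposedFace (d : ℕ) (L F : Set (Euc (d + 1))) : Prop :=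
  F.Nonempty ∧ ∃ u ∈ uSphere d, (∀ y ∈ L, ⟪u, y⟫ ≤ 0) ∧ F = {y ∈ L | ⟪u, y⟫ = 0}

/-- The conjugate face of an exposed face `F` of a convex body `K ⊆ S^d`. -/
def conjFace (d : ℕ) (K F : Set (Euc (d + 1))) : Set (Euc (d + 1)) :=
  {x ∈ sphPolar d K | ∀ y ∈ F, ⟪x, y⟫ = 0}

/-- Two Euclidean convex bodies are combinatorially equivalent if there is a
homeomorphism between their boundaries mapping faces to faces. -/
def CombEquiv {n : ℕ} (K K' : Set (Euc n)) : Prop :=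
  ∃ h : (frontier K) ≃ₜ (frontier K'),
    ∀ X : Set (frontier K),
      IsFace K (Subtype.val '' X) ↔ IsFace K' (Subtype.val '' (h '' X))

/-- The combinatorial illumination number of a Euclidean convex body `K`: the smallest
number of directions that illuminate some convex body combinatorially equivalent to `K`. -/
def combIllumNumber {n : ℕ} (K : Set (Euc n)) : ℕ∞ :=
  sInf {m : ℕ∞ | ∃ K' : Set (Euc n), IsConvexBody K' ∧ CombEquiv K K' ∧
    ∃ D : Finset (Euc n), IlluminatesDirs D K' ∧ (D.card : ℕ∞) = m}

/-- A convex polytope in `S^d`: a convex body that is the intersection of finitely many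
closed hemispheres. -/
def IsSphPolytope (d : ℕ) (P : Set (Euc (d + 1))) : Prop :=
  IsSphBody d P ∧ ∃ s : Finset (Euc (d + 1)), (∀ u ∈ s, u ∈ uSphere d) ∧
    P = uSphere d ∩ {y | ∀ u ∈ s, ⟪u, y⟫ ≤ 0}

end

/-!
For `x ∈ F̂` the functional `⟪x, ·⟫` vanishes at `q` and is negative on the interior of `K`
(the interior of the cone over `K` lies in the open half-space `⟪x, ·⟫ < 0`). If `q` is
illuminated from `p`, the great circle through `p` and `q` meets the interior in a point
`α p + β q`, and `α ≤ 0`: otherwise that point lies on the arc from `p` to `q`, or `p` lies on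
the arc from it to `q` and hence in `K`. So `α ⟪x, p⟫ < 0` and `x ∈ H_p`.

Conversely, the outer normal of `F` lies in `F̂ ⊆ H_p`, which keeps the arc from `p` to `q` out of
the interior. If the great circle missed the interior, separating the cone over `K` from the
cone spanned by `q` and `-p` would give a supporting great sphere through `q`; by minimality of
`F` its exposed face contains `F`, so its normal is a point of `F̂` outside `H_p`.
-/

section Projection

variable {n : ℕ}

lemma mem_uSphere_iff {d : ℕ} {x : Euc (d + 1)} : x ∈ uSphere d ↔ ‖x‖ = 1 :=
  mem_sphere_zero_iff_norm

lemma ne_zero_of_mem_uSphere {d : ℕ} {x : Euc (d + 1)} (hx : x ∈ uSphere d) : x ≠ 0 :=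
  ne_zero_of_mem_unit_sphere ⟨x, hx⟩

lemma nproj_of_norm_eq_one {v : Euc n} (hv : ‖v‖ = 1) : nproj v = v := by
  simp [nproj, hv]

lemma norm_smul_nproj (v : Euc n) : ‖v‖ • nproj v = v := by
  rcases eq_or_ne v 0 with rfl | hv
  · simp
  · rw [nproj, smul_smul, mul_inv_cancel₀ (norm_ne_zero_iff.2 hv), one_smul]

lemma nproj_mem_uSphere {d : ℕ} {v : Euc (d + 1)} (hv : v ≠ 0) : nproj v ∈ uSphere d := by
  rw [mem_uSphere_iff, nproj, norm_smul, norm_inv, norm_norm,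
    inv_mul_cancel₀ (norm_ne_zero_iff.2 hv)]

lemma nproj_smul_of_pos (v : Euc n) {c : ℝ} (hc : 0 < c) : nproj (c • v) = nproj v := by
  rw [nproj, nproj, norm_smul, Real.norm_of_nonneg hc.le, smul_smul]
  congr 1
  field_simp

lemma inner_nproj_left (w y : Euc n) : ⟪nproj w, y⟫ = ‖w‖⁻¹ * ⟪w, y⟫ :=
  real_inner_smul_left _ _ _

lemma inner_nproj_right (x w : Euc n) : ⟪x, nproj w⟫ = ‖w‖⁻¹ * ⟪x, w⟫ :=
  real_inner_smul_right _ _ _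

lemma continuousAt_nproj {v : Euc n} (hv : v ≠ 0) : ContinuousAt nproj v :=
  (continuousAt_id.norm.inv₀ (norm_ne_zero_iff.2 hv)).smul continuousAt_id

lemma nproj_mem_sphSeg {p q : Euc n} {s t : ℝ} (hs : 0 ≤ s) (ht : 0 ≤ t)
    (hne : s • p + t • q ≠ 0) : nproj (s • p + t • q) ∈ sphSeg p q := by
  have hst : 0 < s + t := by
    refine (add_nonneg hs ht).lt_of_ne fun h => hne ?_
    rw [(by linarith : s = 0), (by linarith : t = 0), zero_smul, zero_smul, add_zero]
  refine ⟨t / (s + t), ⟨by positivity, div_le_one_of_le₀ (by linarith) hst.le⟩, ?_⟩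
  have hcomb : (1 - t / (s + t)) • p + (t / (s + t)) • q = (s + t)⁻¹ • (s • p + t • q) := by
    rw [one_sub_div hst.ne', add_sub_cancel_right, div_eq_inv_mul, div_eq_inv_mul, smul_add,
      smul_smul, smul_smul]
  simp only [hcomb, nproj_smul_of_pos _ (inv_pos.2 hst)]

lemma inner_nonneg_of_mem_sphSeg {x p q v : Euc n} (hp : 0 ≤ ⟪x, p⟫) (hq : 0 ≤ ⟪x, q⟫)
    (hv : v ∈ sphSeg p q) : 0 ≤ ⟪x, v⟫ := by
  obtain ⟨t, ⟨ht0, ht1⟩, rfl⟩ := hv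
  rw [inner_nproj_right, inner_add_right, real_inner_smul_right, real_inner_smul_right]
  have : 0 ≤ 1 - t := by linarith
  positivity

end Projection

section Cone

variable {n : ℕ} {K : Set (Euc n)} {x : Euc n}

def sphCone (K : Set (Euc n)) : Set (Euc n) :=
  {v | ∃ r : ℝ, 0 ≤ r ∧ ∃ y ∈ K, r • y = v}

lemma subset_sphCone : K ⊆ sphCone K :=
  fun y hy => ⟨1, zero_le_one, y, hy, one_smul _ _⟩

lemma zero_mem_sphCone (hK : K.Nonempty) : (0 : Euc n) ∈ sphCone K :=
  let ⟨y, hy⟩ := hK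
  ⟨0, le_rfl, y, hy, zero_smul _ _⟩

lemma sphCone_subset_setOf_inner_nonpos (hx : ∀ y ∈ K, ⟪x, y⟫ ≤ 0) :
    sphCone K ⊆ {v | ⟪x, v⟫ ≤ 0} := by
  rintro _ ⟨r, hr, y, hy, rfl⟩
  exact (real_inner_smul_right x y r).trans_le (mul_nonpos_of_nonneg_of_nonpos hr (hx y hy))

lemma interior_setOf_inner_nonpos (hx : x ≠ 0) :
    interior {v | ⟪x, v⟫ ≤ 0} = {v | ⟪x, v⟫ < 0} := by
  have hf : innerSL ℝ x ≠ 0 := fun h => hx (by simpa using congrArg (· x) h)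
  have := ((innerSL ℝ x).isOpenMap_of_ne_zero hf).preimage_interior_eq_interior_preimage
    (innerSL ℝ x).continuous (Iic 0)
  rw [interior_Iic] at this
  exact this.symm

end Cone

section Sphere

variable {d : ℕ} {K F G : Set (Euc (d + 1))} {p q x : Euc (d + 1)}

lemma SphConvex.nproj_add_mem (hK : SphConvex d K) {a b : Euc (d + 1)} (ha : a ∈ K)
    (hb : b ∈ K) {s t : ℝ} (hs : 0 ≤ s) (ht : 0 ≤ t) (hne : s • a + t • b ≠ 0) :
    nproj (s • a + t • b) ∈ K :=
  hK.2.2 a ha b hb (nproj_mem_sphSeg hs ht hne)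

lemma sphInt_subset : sphInt d K ⊆ K :=
  fun _ ⟨hmS, _, _, hmU, hUK⟩ => hUK ⟨hmU, hmS⟩

section SphericalCone

lemma SphConvex.convex_sphCone (hK : SphConvex d K) : Convex ℝ (sphCone K) := by
  rintro _ ⟨r₁, hr₁, y₁, hy₁, rfl⟩ _ ⟨r₂, hr₂, y₂, hy₂, rfl⟩ a b ha hb -
  rw [smul_smul, smul_smul]
  by_cases hv : (a * r₁) • y₁ + (b * r₂) • y₂ = 0
  · exact ⟨0, le_rfl, y₁, hy₁, by rw [zero_smul, hv]⟩
  · exact ⟨_, norm_nonneg _, _, hK.nproj_add_mem hy₁ hy₂ (by positivity) (by positivity) hv,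
      norm_smul_nproj _⟩

lemma sphInt_subset_interior_sphCone : sphInt d K ⊆ interior (sphCone K) := by
  rintro m ⟨hmS, U, hU, hmU, hUK⟩
  have hm0 := ne_zero_of_mem_uSphere hmS
  refine mem_interior.2 ⟨{v | v ≠ 0} ∩ nproj ⁻¹' U, ?_, ?_, hm0, ?_⟩
  · rintro v ⟨hv0, hvU⟩
    exact ⟨‖v‖, norm_nonneg v, nproj v, hUK ⟨hvU, nproj_mem_uSphere hv0⟩, norm_smul_nproj v⟩
  · exact ContinuousOn.isOpen_inter_preimage
      (fun v hv => (continuousAt_nproj hv).continuousWithinAt) isOpen_ne hU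
  · rwa [mem_preimage, nproj_of_norm_eq_one (mem_uSphere_iff.1 hmS)]

lemma nproj_mem_sphInt_of_mem_interior_sphCone (hK : K ⊆ uSphere d) {v : Euc (d + 1)}
    (hv : v ∈ interior (sphCone K)) (hv0 : v ≠ 0) : nproj v ∈ sphInt d K := by
  refine ⟨nproj_mem_uSphere hv0, (‖v‖ • ·) ⁻¹' interior (sphCone K),
    isOpen_interior.preimage (continuous_const_smul _), by rwa [mem_preimage, norm_smul_nproj],
    ?_⟩
  rintro w ⟨hw, hwS⟩
  obtain ⟨r, hr, y, hy, hyw⟩ := interior_subset hw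
  have hrv : r = ‖v‖ := by
    simpa [norm_smul, Real.norm_of_nonneg hr, mem_uSphere_iff.1 (hK hy),
      mem_uSphere_iff.1 hwS] using congrArg norm hyw
  rw [hrv] at hyw
  rwa [← smul_right_injective _ (norm_ne_zero_iff.2 hv0) hyw]

lemma inner_neg_of_mem_sphInt (hx : x ≠ 0) (hxK : ∀ y ∈ K, ⟪x, y⟫ ≤ 0) {m : Euc (d + 1)}
    (hm : m ∈ sphInt d K) : ⟪x, m⟫ < 0 := by
  have := interior_mono (sphCone_subset_setOf_inner_nonpos hxK) (sphInt_subset_interior_sphCone hm)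
  rwa [interior_setOf_inner_nonpos hx] at this

lemma SphConvex.zero_notMem_interior_sphCone (hK : SphConvex d K) :
    (0 : Euc (d + 1)) ∉ interior (sphCone K) := by
  obtain ⟨c, hc, hKc⟩ := hK.2.1
  have hcK : ∀ y ∈ K, ⟪-c, y⟫ ≤ 0 := fun y hy => by
    rw [inner_neg_left]
    exact neg_nonpos.2 (hKc hy).2.le
  intro h
  have := interior_mono (sphCone_subset_setOf_inner_nonpos hcK) h
  rw [interior_setOf_inner_nonpos (neg_ne_zero.2 (ne_zero_of_mem_uSphere hc))] at this
  simp at this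

theorem SphConvex.exists_mem_sphPolar_inner_nonneg (hK : SphConvex d K)
    (hint : (sphInt d K).Nonempty) {a b : Euc (d + 1)}
    (hab : ∀ s t : ℝ, 0 ≤ s → 0 ≤ t → s • a + t • b ≠ 0 → nproj (s • a + t • b) ∉ sphInt d K) :
    ∃ x ∈ sphPolar d K, 0 ≤ ⟪x, a⟫ ∧ 0 ≤ ⟪x, b⟫ := by
  set T : Set (Euc (d + 1)) := {v | ∃ s t : ℝ, 0 ≤ s ∧ 0 ≤ t ∧ s • a + t • b = v}
  have hT : Convex ℝ T := by
    rintro _ ⟨s₁, t₁, hs₁, ht₁, rfl⟩ _ ⟨s₂, t₂, hs₂, ht₂, rfl⟩ c e hc he -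
    exact ⟨c * s₁ + e * s₂, c * t₁ + e * t₂, by positivity, by positivity, by module⟩
  have h0T : (0 : Euc (d + 1)) ∈ T := ⟨0, 0, le_rfl, le_rfl, by simp⟩
  have hdisj : Disjoint (interior (sphCone K)) T := by
    rw [Set.disjoint_left]
    rintro _ hv ⟨s, t, hs, ht, rfl⟩
    by_cases hv0 : s • a + t • b = 0
    · exact hK.zero_notMem_interior_sphCone (hv0 ▸ hv)
    · exact hab s t hs ht hv0 (nproj_mem_sphInt_of_mem_interior_sphCone hK.1 hv hv0)
  obtain ⟨f, u, hf0, hfK, hfT⟩ := geometric_hahn_banach_of_nonempty_interior hK.convex_sphCone hT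
    hdisj (hint.mono sphInt_subset_interior_sphCone) ⟨0, h0T⟩
  obtain rfl : u = 0 := le_antisymm (by simpa using hfT 0 h0T)
    (by simpa using hfK 0 (zero_mem_sphCone (hint.mono sphInt_subset)))
  set w := (InnerProductSpace.toDual ℝ (Euc (d + 1))).symm f
  have hw : ∀ y, ⟪w, y⟫ = f y := fun y => InnerProductSpace.toDual_symm_apply
  have hw0 : w ≠ 0 := fun h => hf0 (by ext y; rw [← hw, h, inner_zero_left]; rfl)
  refine ⟨nproj w, ⟨nproj_mem_uSphere hw0, fun y hy => ?_⟩, ?_, ?_⟩ <;>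
    rw [inner_nproj_left, hw]
  · exact mul_nonpos_of_nonneg_of_nonpos (by positivity) (hfK y (subset_sphCone hy))
  · exact mul_nonneg (by positivity) (hfT a ⟨1, 0, zero_le_one, le_rfl, by simp⟩)
  · exact mul_nonneg (by positivity) (hfT b ⟨0, 1, le_rfl, zero_le_one, by simp⟩)

end SphericalCone

section ExposedFace

lemma IsSphExposedFace.subset (hF : IsSphExposedFace d K F) : F ⊆ K := by
  obtain ⟨-, u, -, -, rfl⟩ := hF
  exact sep_subset _ _

lemma IsSphExposedFace.mem_of_mem_span (hG : IsSphExposedFace d K G) {y : Euc (d + 1)}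
    (hy : y ∈ K) (hyG : y ∈ Submodule.span ℝ G) : y ∈ G := by
  obtain ⟨-, u, -, -, rfl⟩ := hG
  have hker : Submodule.span ℝ {y ∈ K | ⟪u, y⟫ = 0} ≤ LinearMap.ker (innerₛₗ ℝ u) :=
    Submodule.span_le.2 fun z hz => hz.2
  exact ⟨hy, hker hyG⟩

lemma IsSphExposedFace.inter (hF : IsSphExposedFace d K F) (hG : IsSphExposedFace d K G)
    (hFG : (F ∩ G).Nonempty) : IsSphExposedFace d K (F ∩ G) := by
  obtain ⟨-, u, hu, huK, rfl⟩ := hF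
  obtain ⟨-, v, -, hvK, rfl⟩ := hG
  refine ⟨hFG, ?_⟩
  by_cases huv : u + v = 0
  · refine ⟨u, hu, huK, ?_⟩
    ext y
    have hv : ⟪v, y⟫ = -⟪u, y⟫ := by rw [eq_neg_of_add_eq_zero_right huv, inner_neg_left]
    simp only [mem_inter_iff, mem_ofPred_eq, hv, neg_eq_zero, and_self]
  · have hsum : ∀ y ∈ K, ⟪nproj (u + v), y⟫ = ‖u + v‖⁻¹ * (⟪u, y⟫ + ⟪v, y⟫) := fun y _ => by
      rw [inner_nproj_left, inner_add_left]
    refine ⟨nproj (u + v), nproj_mem_uSphere huv, fun y hy => ?_, ?_⟩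
    · rw [hsum y hy]
      exact mul_nonpos_of_nonneg_of_nonpos (by positivity) (add_nonpos (huK y hy) (hvK y hy))
    · ext y
      simp only [mem_inter_iff, mem_ofPred_eq]
      constructor
      · rintro ⟨⟨hy, hu⟩, -, hv⟩
        exact ⟨hy, by rw [hsum y hy, hu, hv, add_zero, mul_zero]⟩
      · rintro ⟨hy, h⟩
        rw [hsum y hy, mul_eq_zero, inv_eq_zero, norm_eq_zero] at h
        have huv0 := h.resolve_left huv
        have := huK y hy
        have := hvK y hy
        exact ⟨⟨hy, by linarith⟩, hy, by linarith⟩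

lemma span_eq_of_subset_of_sphFaceDim_le {E : Set (Euc (d + 1))} (hEF : E ⊆ F) (hqE : q ∈ E)
    (hq : q ≠ 0) (hdim : sphFaceDim d F ≤ sphFaceDim d E) :
    Submodule.span ℝ E = Submodule.span ℝ F := by
  refine Submodule.eq_of_le_of_finrank_le (Submodule.span_mono hEF) ?_
  have hpos : Module.finrank ℝ (Submodule.span ℝ E) ≠ 0 := fun h => by
    rw [Submodule.finrank_eq_zero] at h
    exact hq (by simpa [h] using Submodule.subset_span (R := ℝ) hqE)
  unfold sphFaceDim at hdim
  omega

/-- An exposed face of least dimension through `q` lies in every exposed face through `q`: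
otherwise intersecting the two would give an exposed face of smaller linear span. -/
lemma IsSphExposedFace.subset_of_sphFaceDim_le (hF : IsSphExposedFace d K F) (hqF : q ∈ F)
    (hq : q ≠ 0)
    (hmin : ∀ F', IsSphExposedFace d K F' → q ∈ F' → sphFaceDim d F ≤ sphFaceDim d F')
    (hG : IsSphExposedFace d K G) (hqG : q ∈ G) : F ⊆ G := by
  have hspan := span_eq_of_subset_of_sphFaceDim_le inter_subset_left ⟨hqF, hqG⟩ hq
    (hmin _ (hF.inter hG ⟨q, hqF, hqG⟩) ⟨hqF, hqG⟩)
  intro y hy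
  refine hG.mem_of_mem_span (hF.subset hy) (Submodule.span_mono (inter_subset_right (s := F)) ?_)
  rw [hspan]
  exact Submodule.subset_span hy

end ExposedFace

section Illumination

lemma SphIlluminated.exists_mem_sphInt_eq (hK : SphConvex d K) (hp : p ∈ uSphere d)
    (hpK : p ∉ K) (hqK : q ∈ K) (h : SphIlluminated d K p q) :
    ∃ m ∈ sphInt d K, ∃ α β : ℝ, α ≤ 0 ∧ α • p + β • q = m := by
  obtain ⟨-, hseg, m, ⟨-, hmpq⟩, hm⟩ := h
  obtain ⟨α, β, rfl⟩ := Submodule.mem_span_pair.1 hmpq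
  refine ⟨_, hm, α, β, not_lt.1 fun hα => ?_, rfl⟩
  have hm0 := ne_zero_of_mem_uSphere hm.1
  rcases le_or_gt 0 β with hβ | hβ
  · have hmseg := nproj_mem_sphSeg hα.le hβ hm0
    rw [nproj_of_norm_eq_one (mem_uSphere_iff.1 hm.1)] at hmseg
    exact (eq_empty_iff_forall_notMem.1 hseg) _ ⟨hmseg, hm⟩
  · -- `p` is a nonnegative combination of `m ∈ K` and `q ∈ K`
    have hpmq : α⁻¹ • (α • p + β • q) + (-β / α) • q = p := by
      rw [smul_add, smul_smul, inv_mul_cancel₀ hα.ne', one_smul, smul_smul, add_assoc,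
        ← add_smul, neg_div, inv_mul_eq_div, add_neg_cancel, zero_smul, add_zero]
    have := hK.nproj_add_mem (sphInt_subset hm) hqK (inv_nonneg.2 hα.le)
      (div_nonneg (neg_nonneg.2 hβ.le) hα.le) (hpmq.symm ▸ ne_zero_of_mem_uSphere hp)
    rw [hpmq, nproj_of_norm_eq_one (mem_uSphere_iff.1 hp)] at this
    exact hpK this

lemma SphIlluminated.conjFace_subset_openHemi (hK : SphConvex d K) (hp : p ∈ uSphere d)
    (hpK : p ∉ K) (hFK : F ⊆ K) (hqF : q ∈ F) (h : SphIlluminated d K p q) :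
    conjFace d K F ⊆ openHemi d p := by
  obtain ⟨m, hm, α, β, hα, rfl⟩ := h.exists_mem_sphInt_eq hK hp hpK (hFK hqF)
  rintro x ⟨⟨hxS, hxK⟩, hxF⟩
  have hxm := inner_neg_of_mem_sphInt (ne_zero_of_mem_uSphere hxS) hxK hm
  rw [inner_add_right, real_inner_smul_right, real_inner_smul_right, hxF q hqF, mul_zero,
    add_zero] at hxm
  refine ⟨hxS, ?_⟩
  rw [real_inner_comm]
  nlinarith

lemma sphSeg_inter_sphInt_eq_empty (hF : IsSphExposedFace d K F) (hqF : q ∈ F)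
    (h : conjFace d K F ⊆ openHemi d p) : sphSeg p q ∩ sphInt d K = ∅ := by
  obtain ⟨-, u, hu, huK, rfl⟩ := hF
  have hpu : 0 < ⟪u, p⟫ := real_inner_comm u p ▸ (h ⟨⟨hu, huK⟩, fun y hy => hy.2⟩).2
  refine eq_empty_iff_forall_notMem.2 fun m ⟨hmseg, hm⟩ => ?_
  have := inner_nonneg_of_mem_sphSeg hpu.le hqF.2.ge hmseg
  linarith [inner_neg_of_mem_sphInt (ne_zero_of_mem_uSphere hu) huK hm]

lemma greatCircle_inter_sphInt_nonempty (hK : SphConvex d K) (hint : (sphInt d K).Nonempty)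
    (hF : IsSphExposedFace d K F) (hqF : q ∈ F)
    (hmin : ∀ F', IsSphExposedFace d K F' → q ∈ F' → sphFaceDim d F ≤ sphFaceDim d F')
    (h : conjFace d K F ⊆ openHemi d p) : (greatCircle d p q ∩ sphInt d K).Nonempty := by
  have hqK := hF.subset hqF
  have hcircle : ∀ s t : ℝ, s • q + t • -p ∈ Submodule.span ℝ {p, q} := fun s t =>
    Submodule.mem_span_pair.2 ⟨-t, s, by module⟩
  by_contra hempty
  obtain ⟨x, hxK, hxq, hxp⟩ := hK.exists_mem_sphPolar_inner_nonneg hint (a := q) (b := -p)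
    fun s t _ _ hne hm => hempty
      ⟨_, ⟨nproj_mem_uSphere hne, Submodule.smul_mem _ _ (hcircle s t)⟩, hm⟩
  have hxq0 : ⟪x, q⟫ = 0 := le_antisymm (hxK.2 q hqK) hxq
  have hFG := hF.subset_of_sphFaceDim_le hqF (ne_zero_of_mem_uSphere (hK.1 hqK)) hmin
    (G := {y ∈ K | ⟪x, y⟫ = 0}) ⟨⟨q, hqK, hxq0⟩, x, hxK.1, hxK.2, rfl⟩ ⟨hqK, hxq0⟩
  have hpx := (h ⟨hxK, fun y hy => (hFG hy).2⟩).2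
  rw [inner_neg_right, real_inner_comm] at hxp
  linarith

end Illumination

end Sphere

theorem stmt16_general (d : ℕ) (K : Set (Euc (d + 1))) (hK : IsSphBody d K)
    (u : Euc (d + 1)) (hdisj : greatSphere d u ∩ K = ∅)
    (p : Euc (d + 1)) (hp : p ∈ greatSphere d u)
    (q : Euc (d + 1)) (hpq : p ≠ -q)
    (F : Set (Euc (d + 1))) (hF : IsSphExposedFace d K F) (hqF : q ∈ F)
    (hmin : ∀ F', IsSphExposedFace d K F' → q ∈ F' → sphFaceDim d F ≤ sphFaceDim d F') :
    SphIlluminated d K p q ↔ conjFace d K F ⊆ openHemi d p := by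
  obtain ⟨-, hconv, hint⟩ := hK
  have hpK : p ∉ K := fun hpK => (eq_empty_iff_forall_notMem.1 hdisj) p ⟨hp, hpK⟩
  refine ⟨SphIlluminated.conjFace_subset_openHemi hconv hp.1 hpK hF.subset hqF, fun h => ?_⟩
  exact ⟨fun hqp => hpq (by rw [hqp, neg_neg]), sphSeg_inter_sphInt_eq_empty hF hqF h,
    greatCircle_inter_sphInt_nonempty hconv hint hF hqF hmin h⟩

/-- For a great sphere `H` disjoint from the convex body `K ⊆ S^d`, a point `p ∈ H` and
a boundary point `q` of `K` with `p ≠ -q`, and `F` the smallest-dimensional exposed face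
of `K` containing `q`: `q` is illuminated from `p` iff `F̂ ⊆ H_p`. -/
theorem stmt16 (d : ℕ) (K : Set (Euc (d + 1))) (hK : IsSphBody d K)
    (u : Euc (d + 1)) (hu : u ∈ uSphere d) (hdisj : greatSphere d u ∩ K = ∅)
    (p : Euc (d + 1)) (hp : p ∈ greatSphere d u)
    (q : Euc (d + 1)) (hq : q ∈ sphBd d K) (hpq : p ≠ -q)
    (F : Set (Euc (d + 1))) (hF : IsSphExposedFace d K F) (hqF : q ∈ F)
    (hmin : ∀ F', IsSphExposedFace d K F' → q ∈ F' → sphFaceDim d F ≤ sphFaceDim d F') :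
    SphIlluminated d K p q ↔ conjFace d K F ⊆ openHemi d p :=
  stmt16_general d K hK u hdisj p hp q hpq F hF hqF hmin
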